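/- arXiv:2406.13595 — 3 statements merged into one kernel-verified Lean document; each statement's English description precedes it below -/
import Mathlib

section
/- Let P be a continuous L-ordered set. Then every Scott open set U satisfies U = ⋁_{x ∈ P} U(x) ∧ ⇑x; consequently {⇑x : x ∈ P} is a base for the Scott L-topology on P. -/
open scoped Classical

namespace FuzzyPaper

variable {L : Type*} [Order.Frame L]

/-- The inclusion L-order on L-subsets: sub(A,B) = ⨅ x, A x ⇨ B x. -/
def subF {X : Type*} (A B : X → L) : L := ⨅ x, A x ⇨ B x

/-- `e` is an L-order: reflexivity, transitivity, antisymmetry. -/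
def IsLOrder {P : Type*} (e : P → P → L) : Prop :=
  (∀ x, e x x = ⊤) ∧ (∀ x y z, e x y ⊓ e y z ≤ e x z) ∧
  (∀ x y, e x y ⊓ e y x = ⊤ → x = y)

/-- `D` is a directed L-subset of `(P, e)`. -/
def IsDirectedL {P : Type*} (e : P → P → L) (D : P → L) : Prop :=
  (⨆ x, D x) = ⊤ ∧ ∀ x y, D x ⊓ D y ≤ ⨆ z, D z ⊓ e x z ⊓ e y z

/-- `x` is a supremum of the L-subset `A`: e(x,y) = sub(A, ↓y) for all y. -/
def IsSupOf {P : Type*} (e : P → P → L) (A : P → L) (x : P) : Prop :=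
  ∀ y, e x y = ⨅ z, A z ⇨ e z y

/-- The fuzzy way-below L-subset ⇓x :
⇓x(y) = ⨅_{D directed with a supremum s} (e(x,s) ⇨ ⨆ d, D d ⊓ e(y,d)). -/
def dwb {P : Type*} (e : P → P → L) (x : P) : P → L := fun y =>
  ⨅ Ds : {Ds : (P → L) × P // IsDirectedL e Ds.1 ∧ IsSupOf e Ds.1 Ds.2},
    e x Ds.1.2 ⇨ ⨆ d, Ds.1.1 d ⊓ e y d

/-- A continuous L-ordered set: ⇓x is directed with supremum x, for each x. -/
def IsContinuousLOrder {P : Type*} (e : P → P → L) : Prop :=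
  IsLOrder e ∧ ∀ x, IsDirectedL e (dwb e x) ∧ IsSupOf e (dwb e x) x

/-- An L-dcpo: every directed L-subset has a supremum. -/
def IsLDcpo {P : Type*} (e : P → P → L) : Prop :=
  IsLOrder e ∧ ∀ D, IsDirectedL e D → ∃ x, IsSupOf e D x

/-- A continuous L-dcpo. -/
def IsContinuousLDcpo {P : Type*} (e : P → P → L) : Prop :=
  IsLDcpo e ∧ ∀ x, IsDirectedL e (dwb e x) ∧ IsSupOf e (dwb e x) x

/-- Scott open L-subsets: upper sets inaccessible by directed suprema. -/
def IsScottOpen {P : Type*} (e : P → P → L) (A : P → L) : Prop :=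
  (∀ x y, A x ⊓ e x y ≤ A y) ∧
  ∀ D s, IsDirectedL e D → IsSupOf e D s → A s = ⨆ x, A x ⊓ D x

/-- The Scott L-topology. -/
def scottOpens {P : Type*} (e : P → P → L) : Set (P → L) := {A | IsScottOpen e A}

/-- `𝒪` is a (stratified) L-topology on X. -/
def IsLTop {X : Type*} (𝒪 : Set (X → L)) : Prop :=
  (∀ A ∈ 𝒪, ∀ B ∈ 𝒪, A ⊓ B ∈ 𝒪) ∧ (∀ S ⊆ 𝒪, sSup S ∈ 𝒪) ∧
  (∀ a : L, (fun _ => a) ∈ 𝒪)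

/-- T₀ separation. -/
def IsT0 {X : Type*} (𝒪 : Set (X → L)) : Prop :=
  ∀ x y : X, (∀ A ∈ 𝒪, A x = A y) → x = y

/-- The specialization L-order of an L-topological space. -/
def specE {X : Type*} (𝒪 : Set (X → L)) : X → X → L := fun x y =>
  ⨅ A : 𝒪, (A : X → L) x ⇨ (A : X → L) y

/-- A point of 𝒪(X): preserves binary meets, arbitrary joins and constants. -/
def IsPoint {X : Type*} (𝒪 : Set (X → L)) (p : 𝒪 → L) : Prop :=
  (∀ A B C : 𝒪, (C : X → L) = (A : X → L) ⊓ (B : X → L) → p C = p A ⊓ p B) ∧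
  (∀ (S : Set 𝒪) (C : 𝒪), (C : X → L) = sSup (Subtype.val '' S) →
    p C = ⨆ A ∈ S, p A) ∧
  (∀ (a : L) (C : 𝒪), (C : X → L) = (fun _ => a) → p C = a)

/-- The inclusion L-order on maps 𝒪 → L (in particular on points). -/
def subPt {X : Type*} (𝒪 : Set (X → L)) (p q : 𝒪 → L) : L := ⨅ A, p A ⇨ q A

/-- η : x ↦ [x], where [x](A) = A(x). -/
def etaPt {X : Type*} (𝒪 : Set (X → L)) (x : X) : 𝒪 → L := fun A => (A : X → L) x

/-- L-sobriety: η is a bijection onto the set of points. -/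
def IsSober {X : Type*} (𝒪 : Set (X → L)) : Prop :=
  (∀ x y : X, etaPt 𝒪 x = etaPt 𝒪 y → x = y) ∧
  (∀ p : 𝒪 → L, IsPoint 𝒪 p → ∃ x, p = etaPt 𝒪 x)

/-- Super-compact L-subsets. -/
def IsSuperCompact {X : Type*} (𝒪 : Set (X → L)) (A : X → L) : Prop :=
  (⨆ x, A x) = ⊤ ∧ ∀ S ⊆ 𝒪, subF A (sSup S) = ⨆ V ∈ S, subF A V

/-- Interior operator. -/
def interiorF {X : Type*} (𝒪 : Set (X → L)) (A : X → L) : X → L :=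
  sSup {B ∈ 𝒪 | B ≤ A}

/-- Locally super-compact L-topological spaces. -/
def IsLocallySC {X : Type*} (𝒪 : Set (X → L)) : Prop :=
  ∀ A ∈ 𝒪, A = fun x => ⨆ B ∈ {B | IsSuperCompact 𝒪 B}, subF B A ⊓ interiorF 𝒪 B x

/-- `ℬ` is a base of the L-topology `𝒪`. -/
def IsBase {X : Type*} (𝒪 : Set (X → L)) (ℬ : Set (X → L)) : Prop :=
  ℬ ⊆ 𝒪 ∧ ∀ A ∈ 𝒪, A = fun x => ⨆ B ∈ ℬ, subF B A ⊓ B x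

/-- Strong locally super-compact: a base of super-compact open sets. -/
def IsStrongLocallySC {X : Type*} (𝒪 : Set (X → L)) : Prop :=
  ∃ ℬ, IsBase 𝒪 ℬ ∧ ∀ B ∈ ℬ, IsSuperCompact 𝒪 B

/-- Continuity of maps of L-topological spaces. -/
def LCont {X Y : Type*} (𝒪X : Set (X → L)) (𝒪Y : Set (Y → L)) (f : X → Y) : Prop :=
  ∀ B ∈ 𝒪Y, (B ∘ f) ∈ 𝒪X

/-- k(x)(y) = e(y,x) if y is compact (⇓y(y) = ⊤), and ⊥ otherwise. -/
noncomputable def kfun {P : Type*} (e : P → P → L) (x : P) : P → L := fun y =>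
  if dwb e y y = ⊤ then e y x else ⊥

/-- Algebraic L-dcpo. -/
def IsAlgebraicLDcpo {P : Type*} (e : P → P → L) : Prop :=
  IsLDcpo e ∧ ∀ x, IsDirectedL e (kfun e x) ∧ IsSupOf e (kfun e x) x

/-- Quasihomeomorphism: f^← : 𝒪Y → 𝒪X is a bijection. -/
def IsQuasiHomeo {X Y : Type*} (𝒪X : Set (X → L)) (𝒪Y : Set (Y → L)) (f : X → Y) : Prop :=
  LCont 𝒪X 𝒪Y f ∧ (∀ A ∈ 𝒪X, ∃ B ∈ 𝒪Y, B ∘ f = A) ∧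
  (∀ B₁ ∈ 𝒪Y, ∀ B₂ ∈ 𝒪Y, B₁ ∘ f = B₂ ∘ f → B₁ = B₂)

/-- Subspace embedding of L-topological spaces. -/
def IsEmbeddingL {X Y : Type*} (𝒪X : Set (X → L)) (𝒪Y : Set (Y → L)) (f : X → Y) : Prop :=
  Function.Injective f ∧ 𝒪X = {A | ∃ B ∈ 𝒪Y, B ∘ f = A}

/-- Strict embedding: a quasihomeomorphism which is a subspace embedding. -/
def IsStrictEmbedding {X Y : Type*} (𝒪X : Set (X → L)) (𝒪Y : Set (Y → L)) (f : X → Y) : Prop :=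
  IsEmbeddingL 𝒪X 𝒪Y f ∧ IsQuasiHomeo 𝒪X 𝒪Y f

/-- L-sobrification: universal L-sober space over X. -/
def IsSobrification {X Y : Type*} (𝒪X : Set (X → L)) (𝒪Y : Set (Y → L)) (j : X → Y) : Prop :=
  IsLTop 𝒪Y ∧ IsSober 𝒪Y ∧ LCont 𝒪X 𝒪Y j ∧
  ∀ (Z : Type*) (𝒪Z : Set (Z → L)), IsLTop 𝒪Z → IsSober 𝒪Z →
    ∀ f : X → Z, LCont 𝒪X 𝒪Z f →
      ∃! g : Y → Z, LCont 𝒪Y 𝒪Z g ∧ f = g ∘ j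


/-! For part one, apply Scott openness of `U` to the directed L-subset `⇓y`, whose supremum is
`y`. For `⇑x = fun y => dwb e y x` to be Scott open, take a directed `D` with supremum `s`: by continuity the
L-subset `⋁_y D(y) ∧ ⇓y` is again directed with supremum `s`, so by the definition of `⇓s`,
`⇓s(x) ≤ ⋁_{d,y} D(y) ∧ ⇓y(d) ∧ e(x,d) ≤ ⋁_y D(y) ∧ ⇓y(x)`. The base property then follows from
`U(x) ≤ sub(⇑x, U)`, which holds because `⇓z(x) ≤ e(x,z)` and `U` is an upper set. -/

lemma subF_inf_apply_le {X : Type*} (A B : X → L) (x : X) : subF A B ⊓ A x ≤ B x :=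
  (inf_le_inf_right _ (iInf_le _ x)).trans himp_inf_le

section ScottBase

variable {P : Type*} {e : P → P → L}

lemma dwb_le_himp {x z s : P} {D : P → L} (hD : IsDirectedL e D) (hs : IsSupOf e D s) :
    dwb e x z ≤ e x s ⇨ ⨆ d, D d ⊓ e z d :=
  iInf_le_of_le ⟨(D, s), hD, hs⟩ le_rfl

lemma le_dwb {x z : P} {c : L}
    (h : ∀ D s, IsDirectedL e D → IsSupOf e D s → c ≤ e x s ⇨ ⨆ d, D d ⊓ e z d) :
    c ≤ dwb e x z :=
  le_iInf fun Ds => h Ds.1.1 Ds.1.2 Ds.2.1 Ds.2.2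

lemma IsSupOf.le_sup (hr : ∀ x, e x x = ⊤) {D : P → L} {s : P} (hs : IsSupOf e D s) (d : P) :
    D d ≤ e d s := by
  have h : ⊤ ≤ D d ⇨ e d s := by
    rw [← hr s, hs s]
    exact iInf_le _ d
  exact himp_eq_top_iff.mp (top_le_iff.mp h)

lemma isDirectedL_principal (hr : ∀ x, e x x = ⊤) (x : P) : IsDirectedL e (fun t => e t x) :=
  ⟨top_unique ((hr x).symm.le.trans (le_iSup (fun t => e t x) x)),
    fun a b => le_iSup_of_le x (by simp [hr x])⟩

lemma isSupOf_principal (hr : ∀ x, e x x = ⊤) (ht : ∀ x y z, e x y ⊓ e y z ≤ e x z) (x : P) :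
    IsSupOf e (fun t => e t x) x := fun y =>
  le_antisymm (le_iInf fun z => le_himp_iff.mpr (by rw [inf_comm]; exact ht z x y))
    ((iInf_le _ x).trans (by simp [hr x]))

lemma dwb_le (hr : ∀ x, e x x = ⊤) (ht : ∀ x y z, e x y ⊓ e y z ≤ e x z) (x z : P) :
    dwb e x z ≤ e z x := by
  refine (dwb_le_himp (isDirectedL_principal hr x) (isSupOf_principal hr ht x)).trans ?_
  rw [hr x, top_himp]
  exact iSup_le fun d => by rw [inf_comm]; exact ht z d x

lemma inf_dwb_le_dwb (ht : ∀ x y z, e x y ⊓ e y z ≤ e x z) (a b x : P) :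
    e a b ⊓ dwb e x b ≤ dwb e x a := by
  refine le_dwb fun D s hD hs => le_himp_iff.mpr ?_
  calc e a b ⊓ dwb e x b ⊓ e x s ≤ e a b ⊓ ⨆ d, D d ⊓ e b d := by
        rw [inf_assoc]
        exact inf_le_inf_left _ (le_himp_iff.mp (dwb_le_himp hD hs))
    _ = ⨆ d, D d ⊓ (e a b ⊓ e b d) := by simp only [inf_iSup_eq, inf_left_comm]
    _ ≤ ⨆ d, D d ⊓ e a d := iSup_mono fun d => inf_le_inf_left _ (ht a b d)

lemma dwb_inf_le_dwb (ht : ∀ x y z, e x y ⊓ e y z ≤ e x z) (x y z : P) :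
    dwb e y x ⊓ e y z ≤ dwb e z x := by
  refine le_dwb fun D s hD hs => le_himp_iff.mpr ?_
  calc dwb e y x ⊓ e y z ⊓ e z s ≤ dwb e y x ⊓ e y s := by
        rw [inf_assoc]
        exact inf_le_inf_left _ (ht y z s)
    _ ≤ ⨆ d, D d ⊓ e x d := le_himp_iff.mp (dwb_le_himp hD hs)

def dwbUnion (e : P → P → L) (D : P → L) : P → L := fun d => ⨆ y, D y ⊓ dwb e y d

lemma isDirectedL_dwbUnion (he : IsContinuousLOrder e) {D : P → L} (hD : IsDirectedL e D) :
    IsDirectedL e (dwbUnion e D) := by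
  obtain ⟨⟨-, ht, -⟩, hc⟩ := he
  have hw : ∀ y y' w a b, D w ⊓ e y w ⊓ e y' w ⊓ (dwb e y a ⊓ dwb e y' b) ≤
      ⨆ z, dwbUnion e D z ⊓ e a z ⊓ e b z := fun y y' w a b =>
    calc D w ⊓ e y w ⊓ e y' w ⊓ (dwb e y a ⊓ dwb e y' b)
          = D w ⊓ ((dwb e y a ⊓ e y w) ⊓ (dwb e y' b ⊓ e y' w)) := by ac_rfl
      _ ≤ D w ⊓ (dwb e w a ⊓ dwb e w b) := by
          gcongr <;> exact dwb_inf_le_dwb ht _ _ _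
      _ ≤ ⨆ z, D w ⊓ (dwb e w z ⊓ e a z ⊓ e b z) := by
          rw [← inf_iSup_eq]
          exact inf_le_inf_left _ ((hc w).1.2 a b)
      _ ≤ ⨆ z, dwbUnion e D z ⊓ e a z ⊓ e b z := iSup_mono fun z => by
          simp only [← inf_assoc]
          gcongr
          exact le_iSup (fun y => D y ⊓ dwb e y z) w
  refine ⟨?_, fun a b => ?_⟩
  · calc ⨆ d, dwbUnion e D d = ⨆ y, D y ⊓ ⨆ d, dwb e y d := by
          simp only [dwbUnion, inf_iSup_eq]
          exact iSup_comm
      _ = ⊤ := by simp only [(hc _).1.1, inf_top_eq, hD.1]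
  · calc dwbUnion e D a ⊓ dwbUnion e D b
          = ⨆ y, ⨆ y', (D y ⊓ D y') ⊓ (dwb e y a ⊓ dwb e y' b) := by
          simp only [dwbUnion, iSup_inf_eq, inf_iSup_eq, inf_inf_inf_comm]
          exact iSup_comm
      _ ≤ ⨆ z, dwbUnion e D z ⊓ e a z ⊓ e b z := iSup₂_le fun y y' => by
          refine (inf_le_inf_right _ (hD.2 y y')).trans ?_
          rw [iSup_inf_eq]
          exact iSup_le fun w => hw y y' w a b

lemma isSupOf_dwbUnion (he : IsContinuousLOrder e) {D : P → L} {s : P} (hs : IsSupOf e D s) :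
    IsSupOf e (dwbUnion e D) s := by
  obtain ⟨⟨hr, ht, -⟩, hc⟩ := he
  intro t
  refine le_antisymm (le_iInf fun z => le_himp_iff.mpr ?_) ?_
  · rw [dwbUnion, inf_iSup_eq]
    refine iSup_le fun y => ?_
    calc e s t ⊓ (D y ⊓ dwb e y z) ≤ e z y ⊓ e y s ⊓ e s t :=
          le_inf (le_inf (inf_le_right.trans (inf_le_right.trans (dwb_le hr ht y z)))
            (inf_le_right.trans (inf_le_left.trans (hs.le_sup hr y)))) inf_le_left
      _ ≤ e z t := (inf_le_inf_right _ (ht z y s)).trans (ht z s t)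
  · rw [hs t]
    refine le_iInf fun y => le_himp_iff.mpr ?_
    rw [(hc y).2 t]
    refine le_iInf fun z => le_himp_iff.mpr ?_
    calc (⨅ w, dwbUnion e D w ⇨ e w t) ⊓ D y ⊓ dwb e y z
          ≤ (dwbUnion e D z ⇨ e z t) ⊓ dwbUnion e D z := by
          rw [inf_assoc]
          exact inf_le_inf (iInf_le _ z) (le_iSup (fun y => D y ⊓ dwb e y z) y)
      _ ≤ e z t := himp_inf_le

lemma isScottOpen_dwb (he : IsContinuousLOrder e) (x : P) :
    IsScottOpen e (fun y => dwb e y x) := by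
  obtain ⟨hr, ht, -⟩ := he.1
  refine ⟨fun y z => dwb_inf_le_dwb ht x y z, fun D s hD hs => le_antisymm ?_ ?_⟩
  · calc dwb e s x ≤ e s s ⇨ ⨆ d, dwbUnion e D d ⊓ e x d :=
          dwb_le_himp (isDirectedL_dwbUnion he hD) (isSupOf_dwbUnion he hs)
      _ = ⨆ d, ⨆ y, D y ⊓ (e x d ⊓ dwb e y d) := by
          simp only [hr, top_himp, dwbUnion, iSup_inf_eq, inf_right_comm, inf_assoc]
      _ ≤ ⨆ y, dwb e y x ⊓ D y := iSup_le fun d => iSup_mono fun y => by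
          rw [inf_comm (dwb e y x)]
          exact inf_le_inf_left _ (inf_dwb_le_dwb ht x d y)
  · exact iSup_le fun y => (inf_le_inf_left _ (hs.le_sup hr y)).trans (dwb_inf_le_dwb ht x y s)

lemma IsScottOpen.eq_iSup_dwb (he : IsContinuousLOrder e) {U : P → L} (hU : IsScottOpen e U) :
    U = fun y => ⨆ x, U x ⊓ dwb e y x :=
  funext fun y => hU.2 _ y (he.2 y).1 (he.2 y).2

lemma IsScottOpen.le_subF_dwb (hr : ∀ x, e x x = ⊤) (ht : ∀ x y z, e x y ⊓ e y z ≤ e x z)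
    {U : P → L} (hU : IsScottOpen e U) (x : P) : U x ≤ subF (fun y => dwb e y x) U :=
  le_iInf fun z => le_himp_iff.mpr ((inf_le_inf_left _ (dwb_le hr ht z x)).trans (hU.1 x z))

end ScottBase

/-- Every Scott open set U = ⨆_x U(x) ⊓ ⇑x; hence {⇑x} is a base of σ_L(P). -/
theorem stmt8 {P : Type*} (e : P → P → L) (he : IsContinuousLOrder e) :
    (∀ U ∈ scottOpens e, U = fun y => ⨆ x, U x ⊓ dwb e y x) ∧
    IsBase (scottOpens e) {B | ∃ x : P, B = fun y => dwb e y x} := by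
  have hr := he.1.1
  have ht := he.1.2.1
  refine ⟨fun U hU => IsScottOpen.eq_iSup_dwb he hU, ?_, fun U hU => funext fun y => ?_⟩
  · rintro B ⟨x, rfl⟩
    exact isScottOpen_dwb he x
  · refine le_antisymm ?_ (iSup₂_le fun B _ => subF_inf_apply_le B U y)
    calc U y = ⨆ x, U x ⊓ dwb e y x := congrFun (IsScottOpen.eq_iSup_dwb he hU) y
      _ ≤ _ := iSup_le fun x => le_iSup₂_of_le (fun z => dwb e z x) ⟨x, rfl⟩
          (inf_le_inf_right _ (IsScottOpen.le_subF_dwb hr ht hU x))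

end FuzzyPaper
end

section
/- Let P be an L-dcpo and x ∈ P. If there exists a directed L-subset D with D ≤ k(x) and ⊔D = x, then k(x) is directed and ⊔k(x) = x, where k(x)(y) = e(y,x) if y is compact and 0 otherwise. -/
open scoped Classical

namespace FuzzyPaper

variable {L : Type*} [Order.Frame L]

/-!
Compactness of `y` gives `e(y, ⊔D) ≤ ⋁_d D(d) ∧ e(y, d)` for every directed `D`; for the given `D`
with `⊔D = x` this bounds `k(x)(y) ≤ ⋁_d D(d) ∧ e(y, d)`. An L-subset containing the directed `D`
and bounded by it in this way is directed, since transitivity of `e` carries upper bounds in `D`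
over to it; and as it lies between `D` and `↓x`, its supremum is still `x`.
-/

section

variable {P : Type*} {e : P → P → L}

theorem IsDirectedL.of_le_of_le_iSup_inf (htrans : ∀ x y z, e x y ⊓ e y z ≤ e x z)
    {D A : P → L} (hD : IsDirectedL e D) (hDA : D ≤ A)
    (hAD : ∀ y, A y ≤ ⨆ d, D d ⊓ e y d) : IsDirectedL e A := by
  refine ⟨top_le_iff.mp (hD.1 ▸ iSup_mono hDA), fun y₁ y₂ => ?_⟩
  calc A y₁ ⊓ A y₂ ≤ (⨆ d, D d ⊓ e y₁ d) ⊓ ⨆ d', D d' ⊓ e y₂ d' :=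
        inf_le_inf (hAD y₁) (hAD y₂)
    _ = ⨆ (d) (d'), (D d ⊓ D d') ⊓ (e y₁ d ⊓ e y₂ d') := by
        rw [iSup_inf_eq]
        simp only [inf_iSup_eq, inf_inf_inf_comm]
    _ ≤ ⨆ z, A z ⊓ e y₁ z ⊓ e y₂ z := iSup₂_le fun d d' => ?_
  calc (D d ⊓ D d') ⊓ (e y₁ d ⊓ e y₂ d')
      ≤ (⨆ z, D z ⊓ e d z ⊓ e d' z) ⊓ (e y₁ d ⊓ e y₂ d') := inf_le_inf_right _ (hD.2 d d')
    _ = ⨆ z, (D z ⊓ e d z ⊓ e d' z) ⊓ (e y₁ d ⊓ e y₂ d') := iSup_inf_eq _ _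
    _ ≤ ⨆ z, A z ⊓ e y₁ z ⊓ e y₂ z := iSup_mono fun z => ?_
  refine le_inf (le_inf ?_ ?_) ?_
  · exact inf_le_left.trans (inf_le_left.trans (inf_le_left.trans (hDA z)))
  · exact (le_inf (inf_le_right.trans inf_le_left)
      (inf_le_left.trans (inf_le_left.trans inf_le_right))).trans (htrans y₁ d z)
  · exact (le_inf (inf_le_right.trans inf_le_right)
      (inf_le_left.trans inf_le_right)).trans (htrans y₂ d' z)

theorem IsSupOf.of_le_of_le_downset (htrans : ∀ x y z, e x y ⊓ e y z ≤ e x z)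
    {D A : P → L} {x : P} (hsup : IsSupOf e D x) (hDA : D ≤ A) (hAx : A ≤ fun z => e z x) :
    IsSupOf e A x := by
  refine fun y => le_antisymm (le_iInf fun z => le_himp_iff.mpr ?_) ?_
  · exact (le_inf (inf_le_right.trans (hAx z)) inf_le_left).trans (htrans z x y)
  · exact hsup y ▸ iInf_mono fun z => himp_le_himp_right (hDA z)

theorem le_iSup_inf_of_dwb_self_eq_top {y s : P} {D : P → L} (hy : dwb e y y = ⊤)
    (hD : IsDirectedL e D) (hsup : IsSupOf e D s) : e y s ≤ ⨆ d, D d ⊓ e y d :=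
  himp_eq_top_iff.mp (iInf_eq_top.mp hy ⟨(D, s), hD, hsup⟩)

theorem kfun_le {x : P} : kfun e x ≤ fun z => e z x := fun z => by
  unfold kfun
  split_ifs <;> simp

theorem kfun_le_iSup_inf {x : P} {D : P → L} (hD : IsDirectedL e D) (hsup : IsSupOf e D x)
    (y : P) : kfun e x y ≤ ⨆ d, D d ⊓ e y d := by
  unfold kfun
  split_ifs with hy
  · exact le_iSup_inf_of_dwb_self_eq_top hy hD hsup
  · exact bot_le

end

/-- If some directed D ≤ k(x) has supremum x, then k(x) is directed with supremum x. -/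
theorem stmt17 {P : Type*} (e : P → P → L) (he : IsLDcpo e) (x : P) (D : P → L)
    (hD : IsDirectedL e D) (hle : D ≤ kfun e x) (hsup : IsSupOf e D x) :
    IsDirectedL e (kfun e x) ∧ IsSupOf e (kfun e x) x := by
  have htrans := he.1.2.1
  exact ⟨hD.of_le_of_le_iSup_inf htrans hle (kfun_le_iSup_inf hD hsup),
    hsup.of_le_of_le_downset htrans hle kfun_le⟩

end FuzzyPaper
end

section
/- Let X be an L-topological space, p a point of 𝒪(X), and A a super-compact open set of X. Then sub_{𝒪(X)}([A], p) = p(A), where [A](B) = sub_X(A,B) for B ∈ 𝒪(X). -/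
open scoped Classical

namespace FuzzyPaper

variable {L : Type*} [Order.Frame L]

theorem subF_self {X : Type*} (A : X → L) : subF A A = ⊤ := by
  simp [subF]

theorem const_subF_inf_le {X : Type*} (A B : X → L) : (fun _ => subF A B) ⊓ A ≤ B := fun x =>
  (inf_le_inf_right _ (iInf_le _ x)).trans himp_inf_le

theorem le_subPt_iff {X : Type*} {𝒪 : Set (X → L)} {p q : 𝒪 → L} {c : L} :
    c ≤ subPt 𝒪 q p ↔ ∀ B, c ⊓ q B ≤ p B := by
  simp only [subPt, le_iInf_iff, le_himp_iff]

theorem IsLTop.const_inf_mem {X : Type*} {𝒪 : Set (X → L)} (hT : IsLTop 𝒪) (c : L)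
    {A : X → L} (hA : A ∈ 𝒪) : (fun _ => c) ⊓ A ∈ 𝒪 :=
  hT.1 _ (hT.2.2 c) _ hA

namespace IsPoint

variable {X : Type*} {𝒪 : Set (X → L)} {p : 𝒪 → L}

theorem monotone (hp : IsPoint 𝒪 p) : Monotone p := by
  intro C B hCB
  have hB : (B : X → L) = sSup (Subtype.val '' ({C, B} : Set 𝒪)) := by
    rw [Set.image_pair, sSup_pair, sup_eq_right.mpr hCB]
  rw [hp.2.1 _ B hB]
  exact le_biSup p (by simp)

theorem map_const_inf (hp : IsPoint 𝒪 p) (hT : IsLTop 𝒪) (c : L) (A : 𝒪) :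
    p ⟨_, hT.const_inf_mem c A.2⟩ = c ⊓ p A := by
  rw [hp.1 ⟨_, hT.2.2 c⟩ A _ rfl, hp.2.2 c ⟨_, hT.2.2 c⟩ rfl]

end IsPoint

theorem stmt19_general {X : Type*} (𝒪 : Set (X → L)) (hT : IsLTop 𝒪)
    (p : 𝒪 → L) (hp : IsPoint 𝒪 p) (A : X → L) (hA : A ∈ 𝒪) :
    subPt 𝒪 (fun B : 𝒪 => subF A (B : X → L)) p = p ⟨A, hA⟩ := by
  apply le_antisymm
  · calc subPt 𝒪 (fun B : 𝒪 => subF A (B : X → L)) p ≤ subF A A ⇨ p ⟨A, hA⟩ :=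
          iInf_le _ (⟨A, hA⟩ : 𝒪)
      _ = p ⟨A, hA⟩ := by rw [subF_self, top_himp]
  · refine le_subPt_iff.2 fun B => ?_
    calc p ⟨A, hA⟩ ⊓ subF A (B : X → L) = p ⟨_, hT.const_inf_mem (subF A B) hA⟩ := by
          rw [hp.map_const_inf hT _ ⟨A, hA⟩, inf_comm]
      _ ≤ p B := hp.monotone (const_subF_inf_le A B)

/-- For a super-compact open A and a point p, sub([A], p) = p(A). -/
theorem stmt19 {X : Type*} (𝒪 : Set (X → L)) (hT : IsLTop 𝒪)
    (p : 𝒪 → L) (hp : IsPoint 𝒪 p) (A : X → L) (hA : A ∈ 𝒪)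
    (hsc : IsSuperCompact 𝒪 A) :
    subPt 𝒪 (fun B : 𝒪 => subF A (B : X → L)) p = p ⟨A, hA⟩ :=
  stmt19_general 𝒪 hT p hp A hA

end FuzzyPaper
end
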